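/- Let Γ = ⟨α_1, …, α_k⟩ ⊂ ℕ^d be an affine semigroup and 𝕂 a field. Let S = {(z, w, i) ∈ ℕ^k × ℕ^k × ℕ : φ_Γ(z) = φ_Γ(w) and |z| = |w| + i}, a submonoid of ℕ^{2k+1}, and let H be its Hilbert basis, i.e. the set of minimal elements of S \ {0} with respect to the componentwise order. Then for every j ≥ 0, the ideal J_j = ⟨y^z − y^w : (z,w,i) ∈ H and i ≤ j⟩ ⊂ 𝕂[y_1, …, y_k] coincides with the ideal I_j = ⟨y^z − y^w : φ_Γ(z) = φ_Γ(w) and ||z| − |w|| ≤ j⟩. -/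
import Mathlib


open Finset

/-- The factorization homomorphism `φ_Γ : ℕ^k → ℕ^d` determined by the
generators `α 1, …, α k`. -/
def phi {d k : ℕ} (α : Fin k → Fin d → ℕ) (z : Fin k → ℕ) : Fin d → ℕ :=
  ∑ i, z i • α i

/-- The length `|z|` of a factorization. -/
def len {k : ℕ} (z : Fin k → ℕ) : ℕ := ∑ i, z i

/-- The length set `L_Γ(γ)`. -/
def lengthSet {d k : ℕ} (α : Fin k → Fin d → ℕ) (γ : Fin d → ℕ) : Set ℕ :=
  len '' {z | phi α z = γ}

/-- The set of successive differences (gaps) of a set of naturals. -/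
def deltaOf (L : Set ℕ) : Set ℕ :=
  {δ | 0 < δ ∧ ∃ a, a ∈ L ∧ a + δ ∈ L ∧ ∀ c ∈ L, ¬(a < c ∧ c < a + δ)}

/-- The delta set `Δ(Γ)` of the affine semigroup generated by `α`. -/
def deltaSet {d k : ℕ} (α : Fin k → Fin d → ℕ) : Set ℕ :=
  ⋃ γ ∈ Set.range (phi α), deltaOf (lengthSet α γ)

/-- The monomial `y^z = y_1^{z_1} ⋯ y_k^{z_k}` in `𝕂[y_1,…,y_k]`. -/
noncomputable def monoY (𝕂 : Type*) [CommSemiring 𝕂] {k : ℕ} (z : Fin k → ℕ) :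
    MvPolynomial (Fin k) 𝕂 :=
  MvPolynomial.monomial (Finsupp.equivFunOnFinite.symm z) 1

/-- The ideal `I_j = ⟨y^z − y^w : φ_Γ(z) = φ_Γ(w), ||z|−|w|| ≤ j⟩`. -/
noncomputable def idealI (𝕂 : Type*) [Field 𝕂] {d k : ℕ} (α : Fin k → Fin d → ℕ)
    (j : ℕ) : Ideal (MvPolynomial (Fin k) 𝕂) :=
  Ideal.span {f | ∃ z w : Fin k → ℕ, phi α z = phi α w ∧
    Nat.dist (len z) (len w) ≤ j ∧ f = monoY 𝕂 z - monoY 𝕂 w}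

/-- The submonoid `S = {(z,w,i) : φ_Γ(z) = φ_Γ(w), |z| = |w| + i} ⊆ ℕ^{2k+1}`. -/
def monS {d k : ℕ} (α : Fin k → Fin d → ℕ) :
    Set ((Fin k → ℕ) × (Fin k → ℕ) × ℕ) :=
  {s | phi α s.1 = phi α s.2.1 ∧ len s.1 = len s.2.1 + s.2.2}

/-- The Hilbert basis of `S`: the minimal nonzero elements of `S` with respect to
the componentwise order. -/
def hilbS {d k : ℕ} (α : Fin k → Fin d → ℕ) :
    Set ((Fin k → ℕ) × (Fin k → ℕ) × ℕ) :=
  {s ∈ monS α | s ≠ 0 ∧ ∀ t ∈ monS α, t ≠ 0 → t ≤ s → t = s}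

section Aux

variable {d k : ℕ}

lemma phi_add (α : Fin k → Fin d → ℕ) (a b : Fin k → ℕ) :
    phi α (a + b) = phi α a + phi α b := by
  unfold phi
  rw [← Finset.sum_add_distrib]
  refine Finset.sum_congr rfl fun i _ => ?_
  simp [add_smul]

lemma len_add (a b : Fin k → ℕ) : len (a + b) = len a + len b := by
  unfold len
  rw [← Finset.sum_add_distrib]
  simp

lemma monoY_add (𝕂 : Type*) [CommSemiring 𝕂] (a b : Fin k → ℕ) :
    monoY 𝕂 (a + b) = monoY 𝕂 a * monoY 𝕂 b := by
  have e : Finsupp.equivFunOnFinite.symm (a + b) =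
      Finsupp.equivFunOnFinite.symm a + Finsupp.equivFunOnFinite.symm b := by
    ext i; simp
  unfold monoY
  rw [MvPolynomial.monomial_mul, one_mul, e]

/-- The measure used for induction: sum of all `2k+1` coordinates. -/
def msum {k : ℕ} (s : (Fin k → ℕ) × (Fin k → ℕ) × ℕ) : ℕ :=
  len s.1 + len s.2.1 + s.2.2

lemma msum_add (s t : (Fin k → ℕ) × (Fin k → ℕ) × ℕ) :
    msum (s + t) = msum s + msum t := by
  simp only [msum, Prod.fst_add, Prod.snd_add, len_add]
  ring

lemma msum_pos {s : (Fin k → ℕ) × (Fin k → ℕ) × ℕ} (hs : s ≠ 0) : 0 < msum s := by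
  rcases Nat.eq_zero_or_pos (msum s) with h | h
  swap
  · exact h
  · exfalso
    apply hs
    have h1 : len s.1 = 0 ∧ len s.2.1 = 0 ∧ s.2.2 = 0 := by
      unfold msum at h; omega
    have e1 : s.1 = 0 := by
      funext i
      have := (Finset.sum_eq_zero_iff.mp h1.1) i (Finset.mem_univ i)
      simpa using this
    have e2 : s.2.1 = 0 := by
      funext i
      have := (Finset.sum_eq_zero_iff.mp h1.2.1) i (Finset.mem_univ i)
      simpa using this
    have e3 : s.2.2 = 0 := h1.2.2
    ext <;> simp [e1, e2, e3]

lemma msum_lt {s t : (Fin k → ℕ) × (Fin k → ℕ) × ℕ}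
    (hle : s ≤ t) (hne : s ≠ t) : msum s < msum t := by
  obtain ⟨h1, h2, h3⟩ : s.1 ≤ t.1 ∧ s.2.1 ≤ t.2.1 ∧ s.2.2 ≤ t.2.2 :=
    ⟨hle.1, hle.2.1, hle.2.2⟩
  have l1 : len s.1 ≤ len t.1 := Finset.sum_le_sum fun i _ => h1 i
  have l2 : len s.2.1 ≤ len t.2.1 := Finset.sum_le_sum fun i _ => h2 i
  rcases Nat.lt_or_ge (msum s) (msum t) with h | h
  · exact h
  · exfalso
    apply hne
    have heq : len s.1 = len t.1 ∧ len s.2.1 = len t.2.1 ∧ s.2.2 = t.2.2 := by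
      unfold msum at h; omega
    have e1 : s.1 = t.1 := by
      by_contra hc
      obtain ⟨i, hi⟩ := Function.ne_iff.mp hc
      have : len s.1 < len t.1 :=
        Finset.sum_lt_sum (fun i _ => h1 i)
          ⟨i, Finset.mem_univ i, lt_of_le_of_ne (h1 i) hi⟩
      omega
    have e2 : s.2.1 = t.2.1 := by
      by_contra hc
      obtain ⟨i, hi⟩ := Function.ne_iff.mp hc
      have : len s.2.1 < len t.2.1 :=
        Finset.sum_lt_sum (fun i _ => h2 i)
          ⟨i, Finset.mem_univ i, lt_of_le_of_ne (h2 i) hi⟩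
      omega
    ext <;> simp [e1, e2, heq.2.2]

/-- Every nonzero element of `S` dominates an element of the Hilbert basis. -/
lemma exists_hilb (α : Fin k → Fin d → ℕ) :
    ∀ n s, msum s = n → s ∈ monS α → s ≠ 0 → ∃ t ∈ hilbS α, t ≤ s := by
  intro n
  induction n using Nat.strong_induction_on with
  | _ n ih =>
    intro s hn hs h0
    by_cases hh : s ∈ hilbS α
    · exact ⟨s, hh, le_refl s⟩
    · have : ¬(s ∈ monS α ∧ s ≠ 0 ∧ ∀ t ∈ monS α, t ≠ 0 → t ≤ s → t = s) := hh
      push_neg at this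
      obtain ⟨u, hu, hu0, hule, hune⟩ := this hs h0
      obtain ⟨t, ht, htle⟩ :=
        ih (msum u) (hn ▸ msum_lt hule hune) u rfl hu hu0
      exact ⟨t, ht, htle.trans hule⟩

/-- If `h ≤ s` are both in `S`, then `s - h ∈ S` and `s = h + (s - h)`. -/
lemma monS_sub (α : Fin k → Fin d → ℕ) {h s : (Fin k → ℕ) × (Fin k → ℕ) × ℕ}
    (hh : h ∈ monS α) (hs : s ∈ monS α) (hle : h ≤ s) :
    ∃ r ∈ monS α, s = h + r := by
  obtain ⟨h1, h2, h3⟩ : h.1 ≤ s.1 ∧ h.2.1 ≤ s.2.1 ∧ h.2.2 ≤ s.2.2 :=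
    ⟨hle.1, hle.2.1, hle.2.2⟩
  refine ⟨(s.1 - h.1, s.2.1 - h.2.1, s.2.2 - h.2.2), ?_, ?_⟩
  · have e1 : h.1 + (s.1 - h.1) = s.1 := by funext i; have := Pi.le_def.mp h1 i; simp only [Pi.add_apply, Pi.sub_apply]; omega
    have e2 : h.2.1 + (s.2.1 - h.2.1) = s.2.1 := by
      funext i; have := Pi.le_def.mp h2 i; simp only [Pi.add_apply, Pi.sub_apply]; omega
    constructor
    · have p1 : phi α h.1 + phi α (s.1 - h.1) = phi α s.1 := by
        rw [← phi_add, e1]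
      have p2 : phi α h.2.1 + phi α (s.2.1 - h.2.1) = phi α s.2.1 := by
        rw [← phi_add, e2]
      have := hs.1
      have := hh.1
      simp only at *
      have : phi α h.2.1 + phi α (s.1 - h.1) = phi α h.2.1 + phi α (s.2.1 - h.2.1) := by
        rw [← hh.1] at p2 ⊢
        rw [p1, p2, hs.1]
      exact add_left_cancel this
    · have l1 : len h.1 + len (s.1 - h.1) = len s.1 := by rw [← len_add, e1]
      have l2 : len h.2.1 + len (s.2.1 - h.2.1) = len s.2.1 := by rw [← len_add, e2]
      have := hs.2
      have := hh.2
      simp only at *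
      omega
  · have e1 : s.1 = h.1 + (s.1 - h.1) := by funext i; have := Pi.le_def.mp h1 i; simp only [Pi.add_apply, Pi.sub_apply]; omega
    have e2 : s.2.1 = h.2.1 + (s.2.1 - h.2.1) := by
      funext i; have := Pi.le_def.mp h2 i; simp only [Pi.add_apply, Pi.sub_apply]; omega
    have e3 : s.2.2 = h.2.2 + (s.2.2 - h.2.2) := by omega
    ext <;> simp only [Prod.fst_add, Prod.snd_add] <;>
      [skip; skip; skip] <;> first
      | exact congrFun e1 _
      | exact congrFun e2 _
      | exact e3

/-- Key lemma: the binomial of any element of `S` with small gap lies in `J_j`. -/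
lemma key_mem (𝕂 : Type*) [Field 𝕂] (α : Fin k → Fin d → ℕ) (j : ℕ) :
    ∀ n s, msum s = n → s ∈ monS α → s.2.2 ≤ j →
      monoY 𝕂 s.1 - monoY 𝕂 s.2.1 ∈
        Ideal.span {f : MvPolynomial (Fin k) 𝕂 |
          ∃ s ∈ hilbS α, s.2.2 ≤ j ∧ f = monoY 𝕂 s.1 - monoY 𝕂 s.2.1} := by
  intro n
  induction n using Nat.strong_induction_on with
  | _ n ih =>
    intro s hn hs hj
    by_cases h0 : s = 0
    · subst h0
      simp
    · obtain ⟨h, hhilb, hle⟩ := exists_hilb α (msum s) s rfl hs h0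
      have hhS : h ∈ monS α := hhilb.1
      obtain ⟨r, hr, hsr⟩ := monS_sub α hhS hs hle
      have hne0 : h ≠ 0 := hhilb.2.1
      have hmsum : msum r < msum s := by
        have := msum_add h r
        have hp := msum_pos hne0
        rw [← hsr] at this
        omega
      have hrj : r.2.2 ≤ j := by
        have : s.2.2 = h.2.2 + r.2.2 := by rw [hsr]; rfl
        omega
      have hhj : h.2.2 ≤ j := by
        have : s.2.2 = h.2.2 + r.2.2 := by rw [hsr]; rfl
        omega
      have ihr := ih (msum r) (hn ▸ hmsum) r rfl hr hrj
      have e1 : s.1 = h.1 + r.1 := by rw [hsr]; rfl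
      have e2 : s.2.1 = h.2.1 + r.2.1 := by rw [hsr]; rfl
      rw [e1, e2, monoY_add, monoY_add]
      have decomp : monoY 𝕂 h.1 * monoY 𝕂 r.1 - monoY 𝕂 h.2.1 * monoY 𝕂 r.2.1 =
          monoY 𝕂 r.1 * (monoY 𝕂 h.1 - monoY 𝕂 h.2.1) +
            monoY 𝕂 h.2.1 * (monoY 𝕂 r.1 - monoY 𝕂 r.2.1) := by ring
      rw [decomp]
      refine add_mem ?_ ?_
      · exact Ideal.mul_mem_left _ _ (Ideal.subset_span ⟨h, hhilb, hhj, rfl⟩)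
      · exact Ideal.mul_mem_left _ _ ihr

end Aux

/-- For every `j ≥ 0`, the ideal `J_j` generated by the binomials `y^z − y^w` for
`(z,w,i)` in the Hilbert basis `H` with `i ≤ j` coincides with the ideal `I_j`. -/
theorem stmt4 (𝕂 : Type*) [Field 𝕂] {d k : ℕ} (α : Fin k → Fin d → ℕ)
    (hne : ∀ i, α i ≠ 0)
    (hmin : ∀ i, α i ∉ AddSubmonoid.closure (α '' {j | j ≠ i})) :
    ∀ j : ℕ,
      Ideal.span {f : MvPolynomial (Fin k) 𝕂 |
          ∃ s ∈ hilbS α, s.2.2 ≤ j ∧ f = monoY 𝕂 s.1 - monoY 𝕂 s.2.1} =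
        idealI 𝕂 α j := by
  intro j
  apply le_antisymm
  · rw [Ideal.span_le]
    rintro f ⟨s, hs, hj, rfl⟩
    refine Ideal.subset_span ⟨s.1, s.2.1, hs.1.1, ?_, rfl⟩
    have h2 := hs.1.2
    simp [Nat.dist] at h2 ⊢
    omega
  · rw [idealI, Ideal.span_le]
    rintro f ⟨z, w, hphi, hdist, rfl⟩
    simp only [Nat.dist] at hdist
    rcases le_total (len w) (len z) with h | h
    · exact key_mem 𝕂 α j (msum (z, w, len z - len w)) (z, w, len z - len w) rfl
        ⟨hphi, by simp; omega⟩ (by simp; omega)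
    · have : monoY 𝕂 z - monoY 𝕂 w = -(monoY 𝕂 w - monoY 𝕂 z) := by ring
      rw [this]
      exact neg_mem (key_mem 𝕂 α j (msum (w, z, len w - len z)) (w, z, len w - len z)
        rfl ⟨hphi.symm, by simp; omega⟩ (by simp; omega))
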